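/- Let N_r, N_d ≥ 1 be integers, Ω_sr, Ω_rd, Ω_sp, Ω_rp > 0 and 0 < a₂ < 1. Let δ_sr be the maximum of N_r i.i.d. exponentials with mean Ω_sr, δ_rd the maximum of N_d i.i.d. exponentials with mean Ω_rd, and λ_sp, λ_rp exponentials with means Ω_sp, Ω_rp, all mutually independent. Then for every x ≥ 0, 𝒴 = min{a₂δ_sr/λ_sp, δ_rd/λ_rp} satisfies P(𝒴 > x) = 1 − Σ_{k=1}^{N_r}(−1)^{k−1}C(N_r,k)·kΩ_sp x/(a₂Ω_sr + kΩ_sp x) − Σ_{j=1}^{N_d}(−1)^{j−1}C(N_d,j)·jΩ_rp x/(Ω_rd + jΩ_rp x) + Σ_{k=1}^{N_r}Σ_{j=1}^{N_d}(−1)^{k+j}C(N_r,k)C(N_d,j)·kjΩ_spΩ_rp x²/[(a₂Ω_sr + kΩ_sp x)(Ω_rd + jΩ_rp x)]. -/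

import Mathlib

open MeasureTheory Set ProbabilityTheory Real

/-!
Since `λ_sp, λ_rp > 0` almost surely, `𝒴 > x` is the event `x λ_sp < a₂ δ_sr ∧ x λ_rp < δ_rd`,
and the pairs `(λ_sp, δ_sr)` and `(λ_rp, δ_rd)` are functions of disjoint blocks of the
independent family, so its probability is the product of the two probabilities. Each factor is
obtained by conditioning on `λ`: by independence of the `N` branches and the binomial theorem,
`P(δ > t) = 1 - (1 - e^{-t/Ω})^N = ∑_k (-1)^(k-1) C(N,k) e^{-kt/Ω}`, and integrating the
exponentials against the law of `λ` is the Laplace transform `∫ e^{-cs} dExp(r) = r / (r + c)`.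
Expanding the product of the two factors gives the double sum.
-/

theorem one_sub_one_sub_pow {R : Type*} [CommRing R] (q : R) (N : ℕ) :
    1 - (1 - q) ^ N = ∑ k ∈ Finset.Icc 1 N, (-1) ^ (k - 1) * (N.choose k : R) * q ^ k := by
  rw [sub_eq_neg_add 1 q, add_pow, Finset.range_eq_Ico, Finset.sum_eq_sum_Ico_succ_bot (by omega)]
  simp only [pow_zero, one_pow, mul_one, Nat.choose_zero_right, Nat.cast_one, zero_add,
    sub_add_cancel_left, ← Finset.sum_neg_distrib]
  refine Finset.sum_congr (by ext; simp) fun k hk => ?_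
  obtain ⟨j, rfl⟩ : ∃ j, k = j + 1 := ⟨k - 1, by rw [Finset.mem_Icc] at hk; omega⟩
  simp only [neg_pow q, add_tsub_cancel_right, pow_succ]
  ring

theorem sum_Icc_neg_one_pow_mul_choose {R : Type*} [CommRing R] {N : ℕ} (hN : N ≠ 0) :
    ∑ k ∈ Finset.Icc 1 N, (-1) ^ (k - 1) * (N.choose k : R) = 1 := by
  simpa [zero_pow hN] using (one_sub_one_sub_pow (1 : R) N).symm

theorem sum_Icc_alternating_mul_sum_Icc {R : Type*} [CommRing R] (M N : ℕ) (f g : ℕ → R) :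
    (∑ k ∈ Finset.Icc 1 M, (-1) ^ (k - 1) * (M.choose k : R) * f k)
        * (∑ j ∈ Finset.Icc 1 N, (-1) ^ (j - 1) * (N.choose j : R) * g j)
      = ∑ k ∈ Finset.Icc 1 M, ∑ j ∈ Finset.Icc 1 N,
          (-1) ^ (k + j) * (M.choose k : R) * (N.choose j : R) * (f k * g j) := by
  rw [Finset.sum_mul_sum]
  refine Finset.sum_congr rfl fun k hk => Finset.sum_congr rfl fun j hj => ?_
  obtain ⟨k, rfl⟩ : ∃ k', k = k' + 1 := ⟨k - 1, by rw [Finset.mem_Icc] at hk; omega⟩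
  obtain ⟨j, rfl⟩ : ∃ j', j = j' + 1 := ⟨j - 1, by rw [Finset.mem_Icc] at hj; omega⟩
  simp only [add_tsub_cancel_right, show k + 1 + (j + 1) = k + j + 2 by ring, pow_add]
  ring

theorem one_sub_mul_one_sub_sum_Icc {R : Type*} [CommRing R] (M N : ℕ) (f g : ℕ → R) :
    (1 - ∑ k ∈ Finset.Icc 1 M, (-1) ^ (k - 1) * (M.choose k : R) * f k)
        * (1 - ∑ j ∈ Finset.Icc 1 N, (-1) ^ (j - 1) * (N.choose j : R) * g j)
      = 1 - ∑ k ∈ Finset.Icc 1 M, (-1) ^ (k - 1) * (M.choose k : R) * f k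
          - ∑ j ∈ Finset.Icc 1 N, (-1) ^ (j - 1) * (N.choose j : R) * g j
          + ∑ k ∈ Finset.Icc 1 M, ∑ j ∈ Finset.Icc 1 N,
              (-1) ^ (k + j) * (M.choose k : R) * (N.choose j : R) * (f k * g j) := by
  rw [← sum_Icc_alternating_mul_sum_Icc]
  ring

theorem expMeasure_Iic_zero {r : ℝ} (hr : 0 < r) : expMeasure r (Iic 0) = 0 := by
  have := isProbabilityMeasure_expMeasure hr
  simp [← ofReal_cdf, cdf_expMeasure_eq hr]

theorem ae_expMeasure_pos {r : ℝ} (hr : 0 < r) : ∀ᵐ s ∂expMeasure r, 0 < s := by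
  rw [ae_iff]
  convert expMeasure_Iic_zero hr using 2
  ext; simp

theorem integral_exp_neg_mul_expMeasure {r c : ℝ} (hr : 0 < r) (hc : -r < c) :
    ∫ s, exp (-(c * s)) ∂expMeasure r = r / (r + c) := by
  have hpdf : ∀ s, (gammaPDF 1 r s).toReal • exp (-(c * s))
      = (Ici 0).indicator (fun s => r * exp (-(r + c) * s)) s := by
    intro s
    change (exponentialPDF r s).toReal • _ = _
    rw [exponentialPDF_eq, smul_eq_mul]
    by_cases hs : 0 ≤ s
    · rw [if_pos hs, indicator_of_mem (mem_Ici.2 hs), ENNReal.toReal_ofReal (by positivity),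
        mul_assoc, ← exp_add]
      ring_nf
    · simp [hs]
  rw [expMeasure, gammaMeasure, integral_withDensity_eq_integral_toReal_smul (f := gammaPDF 1 r)
    (measurable_gammaPDFReal 1 r).ennreal_ofReal (.of_forall fun _ => ENNReal.ofReal_lt_top)]
  simp_rw [hpdf]
  rw [integral_indicator measurableSet_Ici, integral_Ici_eq_integral_Ioi, integral_const_mul,
    integral_exp_mul_Ioi (by linarith) 0]
  field_simp
  simp

theorem measurable_iSup_comap_of_mem {Ω ι β : Type*} [mβ : MeasurableSpace β] {f : ι → Ω → β}
    {S : Set ι} {i : ι} (hi : i ∈ S) : Measurable[⨆ j ∈ S, mβ.comap (f j)] (f i) :=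
  Measurable.of_comap_le (le_iSup₂ (f := fun j _ => mβ.comap (f j)) i hi)

section

variable {Ω : Type*} [MeasurableSpace Ω] {P : Measure Ω}

namespace ProbabilityTheory

theorem iIndepFun.measure_iSup_le {ι : Type*} [Fintype ι] [Nonempty ι] {V : ι → Ω → ℝ}
    (hV : ∀ i, Measurable (V i)) (hind : iIndepFun V P) {μ : Measure ℝ}
    (hlaw : ∀ i, P.map (V i) = μ) (u : ℝ) :
    P {ω | ⨆ i, V i ω ≤ u} = μ (Iic u) ^ Fintype.card ι := by
  have hset : {ω | ⨆ i, V i ω ≤ u} = ⋂ i, V i ⁻¹' Iic u := by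
    ext ω; simp [ciSup_le_iff (Set.finite_range _).bddAbove]
  rw [hset, hind.meas_iInter fun i => ⟨Iic u, measurableSet_Iic, rfl⟩]
  simp [← Measure.map_apply (hV _) measurableSet_Iic, hlaw]

theorem IndepFun.measureReal_mem_eq_integral [IsFiniteMeasure P] {α β : Type*}
    [MeasurableSpace α] [MeasurableSpace β] {L : Ω → α} {Z : Ω → β}
    (hL : Measurable L) (hZ : Measurable Z) (h : IndepFun L Z P) {s : Set (α × β)}
    (hs : MeasurableSet s) :
    P.real {ω | (L ω, Z ω) ∈ s} = ∫ l, P.real {ω | (l, Z ω) ∈ s} ∂P.map L := by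
  have hprod : P.map (fun ω => (L ω, Z ω)) = (P.map L).prod (P.map Z) :=
    (indepFun_iff_map_prod_eq_prod_map_map hL.aemeasurable hZ.aemeasurable).1 h
  have hslice : ∀ l, P {ω | (l, Z ω) ∈ s} = P.map Z (Prod.mk l ⁻¹' s) := fun l =>
    (Measure.map_apply hZ (measurable_prodMk_left hs)).symm
  simp only [measureReal_def, hslice]
  rw [integral_toReal (measurable_measure_prodMk_left hs).aemeasurable
      (.of_forall fun _ => measure_lt_top _ _), ← Measure.prod_apply hs, ← hprod,
    Measure.map_apply (hL.prodMk hZ) hs]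
  rfl

theorem iIndepFun.indepFun_of_measurable_iSup {ι β γ δ : Type*} [mβ : MeasurableSpace β]
    [MeasurableSpace γ] [MeasurableSpace δ] {f : ι → Ω → β} (hf : ∀ i, Measurable (f i))
    (h : iIndepFun f P) {S T : Set ι} (hST : Disjoint S T) {g : Ω → γ} {k : Ω → δ}
    (hg : Measurable[⨆ i ∈ S, mβ.comap (f i)] g) (hk : Measurable[⨆ i ∈ T, mβ.comap (f i)] k) :
    IndepFun g k P := by
  rw [IndepFun_iff_Indep]
  exact indep_of_indep_of_le_right
    (indep_of_indep_of_le_left (indep_iSup_of_disjoint (fun i => (hf i).comap_le) h hST)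
      hg.comap_le) hk.comap_le

theorem iIndepFun.indepFun_iSup {ι κ : Type*} [Countable κ] {f : ι → Ω → ℝ}
    (hf : ∀ i, Measurable (f i)) (h : iIndepFun f P) {a : ι} {e : κ → ι} (ha : a ∉ range e) :
    IndepFun (f a) (fun ω => ⨆ i, f (e i) ω) P :=
  h.indepFun_of_measurable_iSup hf (S := {a}) (disjoint_singleton_left.2 ha)
    (measurable_iSup_comap_of_mem rfl)
    (Measurable.iSup fun i => measurable_iSup_comap_of_mem ⟨i, rfl⟩)

theorem iIndepFun.indepFun_prodMk_iSup {ι κ₁ κ₂ : Type*} [Countable κ₁] [Countable κ₂]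
    {f : ι → Ω → ℝ} (hf : ∀ i, Measurable (f i)) (h : iIndepFun f P) {a b : ι} {e₁ : κ₁ → ι}
    {e₂ : κ₂ → ι} (hd : Disjoint (insert a (range e₁)) (insert b (range e₂))) :
    IndepFun (fun ω => (f a ω, ⨆ i, f (e₁ i) ω)) (fun ω => (f b ω, ⨆ j, f (e₂ j) ω)) P :=
  h.indepFun_of_measurable_iSup hf hd
    ((measurable_iSup_comap_of_mem (mem_insert _ _)).prodMk
      (Measurable.iSup fun i => measurable_iSup_comap_of_mem (mem_insert_of_mem _ ⟨i, rfl⟩)))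
    ((measurable_iSup_comap_of_mem (mem_insert _ _)).prodMk
      (Measurable.iSup fun j => measurable_iSup_comap_of_mem (mem_insert_of_mem _ ⟨j, rfl⟩)))

theorem IndepFun.measureReal_inter_preimage_eq_mul {β γ : Type*} [MeasurableSpace β]
    [MeasurableSpace γ] {f : Ω → β} {g : Ω → γ} (h : IndepFun f g P) {s : Set β} {t : Set γ}
    (hs : MeasurableSet s) (ht : MeasurableSet t) :
    P.real (f ⁻¹' s ∩ g ⁻¹' t) = P.real (f ⁻¹' s) * P.real (g ⁻¹' t) := by
  simp [measureReal_def, h.measure_inter_preimage_eq_mul _ _ hs ht]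

end ProbabilityTheory

theorem ae_pos_of_map_eq_expMeasure {L : Ω → ℝ} (hL : Measurable L) {r : ℝ} (hr : 0 < r)
    (hlaw : P.map L = expMeasure r) : ∀ᵐ ω ∂P, 0 < L ω :=
  ae_of_ae_map hL.aemeasurable (hlaw ▸ ae_expMeasure_pos hr)

theorem measureReal_lt_min_div_eq_mul {L₁ L₂ A B : Ω → ℝ}
    (h : IndepFun (fun ω => (L₁ ω, A ω)) (fun ω => (L₂ ω, B ω)) P) (h₁ : ∀ᵐ ω ∂P, 0 < L₁ ω)
    (h₂ : ∀ᵐ ω ∂P, 0 < L₂ ω) (x : ℝ) :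
    P.real {ω | x < min (A ω / L₁ ω) (B ω / L₂ ω)}
      = P.real {ω | x * L₁ ω < A ω} * P.real {ω | x * L₂ ω < B ω} := by
  have hevent : {ω | x < min (A ω / L₁ ω) (B ω / L₂ ω)}
      =ᵐ[P] ({ω | x * L₁ ω < A ω} ∩ {ω | x * L₂ ω < B ω} : Set Ω) := by
    rw [Filter.eventuallyEq_set]
    filter_upwards [h₁, h₂] with ω hL₁ hL₂
    simp [lt_div_iff₀ hL₁, lt_div_iff₀ hL₂, mul_comm x]
  have hS : MeasurableSet {p : ℝ × ℝ | x * p.1 < p.2} :=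
    measurableSet_lt (by fun_prop) (by fun_prop)
  rw [measureReal_congr hevent]
  exact h.measureReal_inter_preimage_eq_mul hS hS

theorem measureReal_lt_iSup_of_expMeasure [IsProbabilityMeasure P] {N : ℕ} (hN : N ≠ 0)
    {V : Fin N → Ω → ℝ} (hV : ∀ i, Measurable (V i)) (hVind : iIndepFun V P) {Ωv : ℝ}
    (hΩv : 0 < Ωv) (hVlaw : ∀ i, P.map (V i) = expMeasure (1 / Ωv)) {t : ℝ} (ht : 0 ≤ t) :
    P.real {ω | t < ⨆ i, V i ω}
      = ∑ k ∈ Finset.Icc 1 N, (-1) ^ (k - 1) * (N.choose k : ℝ) * exp (-(k / Ωv * t)) := by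
  have : Nonempty (Fin N) := ⟨⟨0, Nat.pos_of_ne_zero hN⟩⟩
  have := isProbabilityMeasure_expMeasure (r := 1 / Ωv) (by positivity)
  have hcompl : {ω | t < ⨆ i, V i ω} = {ω | ⨆ i, V i ω ≤ t}ᶜ := by
    ext ω; simp
  rw [hcompl, probReal_compl_eq_one_sub (s := {ω | ⨆ i, V i ω ≤ t})
      ((Measurable.iSup hV) measurableSet_Iic), measureReal_def,
    hVind.measure_iSup_le hV hVlaw, ENNReal.toReal_pow, ← measureReal_def, ← cdf_eq_real,
    cdf_expMeasure_eq (by positivity), if_pos ht, Fintype.card_fin, one_sub_one_sub_pow]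
  refine Finset.sum_congr rfl fun k _ => ?_
  rw [← exp_nat_mul]
  ring_nf

theorem integral_sum_exp_expMeasure {r a : ℝ} (hr : 0 < r) (ha : 0 ≤ a) {N : ℕ} (hN : N ≠ 0) :
    ∫ s, ∑ k ∈ Finset.Icc 1 N, (-1) ^ (k - 1) * (N.choose k : ℝ) * exp (-(k * a * s))
        ∂expMeasure r
      = 1 - ∑ k ∈ Finset.Icc 1 N, (-1) ^ (k - 1) * (N.choose k : ℝ) * (k * a / (r + k * a)) := by
  have := isProbabilityMeasure_expMeasure hr
  have hint (k : ℕ) : Integrable (fun s => exp (-(k * a * s))) (expMeasure r) := by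
    refine Integrable.of_bound (by fun_prop) 1 ?_
    filter_upwards [ae_expMeasure_pos hr] with s hs
    rw [norm_of_nonneg (exp_pos _).le, exp_le_one_iff, neg_nonpos]
    positivity
  rw [integral_finsetSum _ fun k _ => (hint k).const_mul _, eq_sub_iff_add_eq,
    ← Finset.sum_add_distrib]
  refine (Finset.sum_congr rfl fun k _ => ?_).trans (sum_Icc_neg_one_pow_mul_choose hN)
  have hka : 0 ≤ (k : ℝ) * a := by positivity
  rw [integral_const_mul, integral_exp_neg_mul_expMeasure hr (by linarith), ← mul_add]
  field_simp

theorem measureReal_mul_lt_mul_iSup_of_expMeasure [IsProbabilityMeasure P] {N : ℕ} (hN : N ≠ 0)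
    {V : Fin N → Ω → ℝ} {L : Ω → ℝ} (hV : ∀ i, Measurable (V i)) (hL : Measurable L)
    (hVind : iIndepFun V P) (hLV : IndepFun L (fun ω => ⨆ i, V i ω) P)
    {c Ωv Ωl x : ℝ} (hc : 0 < c) (hΩv : 0 < Ωv) (hΩl : 0 < Ωl) (hx : 0 ≤ x)
    (hVlaw : ∀ i, P.map (V i) = expMeasure (1 / Ωv)) (hLlaw : P.map L = expMeasure (1 / Ωl)) :
    P.real {ω | x * L ω < c * ⨆ i, V i ω}
      = 1 - ∑ k ∈ Finset.Icc 1 N, (-1) ^ (k - 1) * (N.choose k : ℝ) *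
          (k * Ωl * x / (c * Ωv + k * Ωl * x)) := by
  set a := x / (c * Ωv) with ha
  have hslice : ∀ s, 0 ≤ s → P.real {ω | x * s < c * ⨆ i, V i ω}
      = ∑ k ∈ Finset.Icc 1 N, (-1) ^ (k - 1) * (N.choose k : ℝ) * exp (-(k * a * s)) := by
    intro s hs
    have hset : {ω | x * s < c * ⨆ i, V i ω} = {ω | x * s / c < ⨆ i, V i ω} := by
      ext ω; simp [div_lt_iff₀ hc, mul_comm c]
    rw [hset, measureReal_lt_iSup_of_expMeasure hN hV hVind hΩv hVlaw (by positivity)]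
    refine Finset.sum_congr rfl fun k _ => ?_
    rw [ha]
    field_simp
  calc P.real {ω | x * L ω < c * ⨆ i, V i ω}
      = ∫ s, P.real {ω | x * s < c * ⨆ i, V i ω} ∂expMeasure (1 / Ωl) := by
        rw [← hLlaw]
        exact hLV.measureReal_mem_eq_integral hL (Measurable.iSup hV)
          (s := {p | x * p.1 < c * p.2}) (measurableSet_lt (by fun_prop) (by fun_prop))
    _ = ∫ s, ∑ k ∈ Finset.Icc 1 N, (-1) ^ (k - 1) * (N.choose k : ℝ) * exp (-(k * a * s))
          ∂expMeasure (1 / Ωl) := by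
        refine integral_congr_ae ?_
        filter_upwards [ae_expMeasure_pos (r := 1 / Ωl) (by positivity)] with s hs
        exact hslice s hs.le
    _ = _ := by
        rw [integral_sum_exp_expMeasure (by positivity) (by positivity) hN]
        congr 1
        refine Finset.sum_congr rfl fun k _ => ?_
        rw [ha]
        field_simp

end

theorem survival_Y_selection_combining_general
    {Ω : Type*} [MeasurableSpace Ω] (P : Measure Ω) [IsProbabilityMeasure P]
    (Nr Nd : ℕ) (hNr : 1 ≤ Nr) (hNd : 1 ≤ Nd)
    (Ωsr Ωrd Ωsp Ωrp a₂ : ℝ)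
    (hΩsr : 0 < Ωsr) (hΩrd : 0 < Ωrd) (hΩsp : 0 < Ωsp) (hΩrp : 0 < Ωrp)
    (ha₂ : 0 < a₂)
    (X : Fin Nr → Ω → ℝ) (Y : Fin Nd → Ω → ℝ) (Lsp Lrp : Ω → ℝ)
    (hX : ∀ i, Measurable (X i)) (hY : ∀ j, Measurable (Y j))
    (hsp : Measurable Lsp) (hrp : Measurable Lrp)
    (hInd : iIndepFun (m := fun _ => (inferInstance : MeasurableSpace ℝ))
      (Sum.elim (Sum.elim X Y) ![Lsp, Lrp]) P)
    (hXlaw : ∀ i, P.map (X i) = expMeasure (1 / Ωsr))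
    (hYlaw : ∀ j, P.map (Y j) = expMeasure (1 / Ωrd))
    (hsplaw : P.map Lsp = expMeasure (1 / Ωsp))
    (hrplaw : P.map Lrp = expMeasure (1 / Ωrp)) :
    ∀ x : ℝ, 0 ≤ x →
      P {ω | x < min (a₂ * (⨆ i, X i ω) / Lsp ω) ((⨆ j, Y j ω) / Lrp ω)}
        = ENNReal.ofReal
            (1 - (∑ k ∈ Finset.Icc 1 Nr, (-1 : ℝ) ^ (k - 1) * (Nr.choose k : ℝ) *
                    ((k : ℝ) * Ωsp * x / (a₂ * Ωsr + (k : ℝ) * Ωsp * x)))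
              - (∑ j ∈ Finset.Icc 1 Nd, (-1 : ℝ) ^ (j - 1) * (Nd.choose j : ℝ) *
                    ((j : ℝ) * Ωrp * x / (Ωrd + (j : ℝ) * Ωrp * x)))
              + ∑ k ∈ Finset.Icc 1 Nr, ∑ j ∈ Finset.Icc 1 Nd,
                  (-1 : ℝ) ^ (k + j) * (Nr.choose k : ℝ) * (Nd.choose j : ℝ) *
                    ((k : ℝ) * (j : ℝ) * Ωsp * Ωrp * x ^ 2 /
                      ((a₂ * Ωsr + (k : ℝ) * Ωsp * x) * (Ωrd + (j : ℝ) * Ωrp * x)))) := by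
  intro x hx
  set F := Sum.elim (Sum.elim X Y) ![Lsp, Lrp]
  have hF : ∀ i, Measurable (F i) := by
    rintro ((i | j) | k)
    exacts [hX i, hY j, by fin_cases k <;> assumption]
  have hA := measureReal_mul_lt_mul_iSup_of_expMeasure (by omega) hX hsp
    (hInd.precomp (Sum.inl_injective.comp Sum.inl_injective) :)
    (hInd.indepFun_iSup hF (a := Sum.inr 0) (e := Sum.inl ∘ Sum.inl) (by simp))
    ha₂ hΩsr hΩsp hx hXlaw hsplaw
  have hB := measureReal_mul_lt_mul_iSup_of_expMeasure (by omega) hY hrp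
    (hInd.precomp (Sum.inl_injective.comp Sum.inr_injective) :)
    (hInd.indepFun_iSup hF (a := Sum.inr 1) (e := Sum.inl ∘ Sum.inr) (by simp))
    one_pos hΩrd hΩrp hx hYlaw hrplaw
  simp only [one_mul] at hB
  have hpair : IndepFun (fun ω => (Lsp ω, a₂ * ⨆ i, X i ω)) (fun ω => (Lrp ω, ⨆ j, Y j ω)) P :=
    (hInd.indepFun_prodMk_iSup hF (a := Sum.inr 0) (b := Sum.inr 1) (e₁ := Sum.inl ∘ Sum.inl)
      (e₂ := Sum.inl ∘ Sum.inr) (by simp [Set.disjoint_left])).comp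
      (measurable_fst.prodMk (measurable_snd.const_mul a₂)) measurable_id
  rw [← ofReal_measureReal, measureReal_lt_min_div_eq_mul hpair
      (ae_pos_of_map_eq_expMeasure hsp (by positivity) hsplaw)
      (ae_pos_of_map_eq_expMeasure hrp (by positivity) hrplaw), hA, hB,
    one_sub_mul_one_sub_sum_Icc]
  congr 2
  refine Finset.sum_congr rfl fun k _ => Finset.sum_congr rfl fun j _ => ?_
  rw [div_mul_div_comm]
  ring

/-- Survival function of `𝒴 = min{a₂δ_sr/λ_sp, δ_rd/λ_rp}` with selection combining. -/
theorem survival_Y_selection_combining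
    {Ω : Type*} [MeasurableSpace Ω] (P : Measure Ω) [IsProbabilityMeasure P]
    (Nr Nd : ℕ) (hNr : 1 ≤ Nr) (hNd : 1 ≤ Nd)
    (Ωsr Ωrd Ωsp Ωrp a₂ : ℝ)
    (hΩsr : 0 < Ωsr) (hΩrd : 0 < Ωrd) (hΩsp : 0 < Ωsp) (hΩrp : 0 < Ωrp)
    (ha₂ : 0 < a₂) (ha₂' : a₂ < 1)
    (X : Fin Nr → Ω → ℝ) (Y : Fin Nd → Ω → ℝ) (Lsp Lrp : Ω → ℝ)
    (hX : ∀ i, Measurable (X i)) (hY : ∀ j, Measurable (Y j))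
    (hsp : Measurable Lsp) (hrp : Measurable Lrp)
    (hInd : iIndepFun (m := fun _ => (inferInstance : MeasurableSpace ℝ))
      (Sum.elim (Sum.elim X Y) ![Lsp, Lrp]) P)
    (hXlaw : ∀ i, P.map (X i) = expMeasure (1 / Ωsr))
    (hYlaw : ∀ j, P.map (Y j) = expMeasure (1 / Ωrd))
    (hsplaw : P.map Lsp = expMeasure (1 / Ωsp))
    (hrplaw : P.map Lrp = expMeasure (1 / Ωrp)) :
    ∀ x : ℝ, 0 ≤ x →
      P {ω | x < min (a₂ * (⨆ i, X i ω) / Lsp ω) ((⨆ j, Y j ω) / Lrp ω)}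
        = ENNReal.ofReal
            (1 - (∑ k ∈ Finset.Icc 1 Nr, (-1 : ℝ) ^ (k - 1) * (Nr.choose k : ℝ) *
                    ((k : ℝ) * Ωsp * x / (a₂ * Ωsr + (k : ℝ) * Ωsp * x)))
              - (∑ j ∈ Finset.Icc 1 Nd, (-1 : ℝ) ^ (j - 1) * (Nd.choose j : ℝ) *
                    ((j : ℝ) * Ωrp * x / (Ωrd + (j : ℝ) * Ωrp * x)))
              + ∑ k ∈ Finset.Icc 1 Nr, ∑ j ∈ Finset.Icc 1 Nd,
                  (-1 : ℝ) ^ (k + j) * (Nr.choose k : ℝ) * (Nd.choose j : ℝ) *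
                    ((k : ℝ) * (j : ℝ) * Ωsp * Ωrp * x ^ 2 /
                      ((a₂ * Ωsr + (k : ℝ) * Ωsp * x) * (Ωrd + (j : ℝ) * Ωrp * x)))) :=
  survival_Y_selection_combining_general P Nr Nd hNr hNd Ωsr Ωrd Ωsp Ωrp a₂ hΩsr hΩrd hΩsp hΩrp ha₂
    X Y Lsp Lrp hX hY hsp hrp hInd hXlaw hYlaw hsplaw hrplaw
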